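/- arXiv:math/0603147 — 2 statements merged into one kernel-verified Lean document; each statement's English description precedes it below -/
import Mathlib

section
/- Let R be an integral domain and ⋆ a (semi)star operation of finite type on R. If R is ⋆-stable and completely integrally closed, then R is a Krull domain and ⋆ = t = w. -/
noncomputable section

section Defs

variable (R K : Type*) [CommRing R] [CommRing K] [Algebra R K]

/-- The residual `(E : F) = {x ∈ K : xF ⊆ E}` of two `R`-submodules of `K`. -/
def resid (E F : Submodule R K) : Submodule R K where
  carrier := {x : K | ∀ y ∈ F, x * y ∈ E}
  add_mem' := by
    intro a b ha hb y hy
    simpa only [Set.mem_setOf_eq, add_mul] using E.add_mem (ha y hy) (hb y hy)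
  zero_mem' := by
    intro y hy
    simp
  smul_mem' := by
    intro c x hx y hy
    simpa [smul_mul_assoc] using E.smul_mem c (hx y hy)

/-- The image of an ideal of `R` as an `R`-submodule of `K`. -/
def idealToSub (I : Ideal R) : Submodule R K :=
  Submodule.map (Algebra.linearMap R K) I

end Defs

/-- A semistar operation on an integral domain `R` with quotient field `K`. -/
structure SemistarOp (R K : Type*) [CommRing R] [Field K] [Algebra R K] where
  star : Submodule R K → Submodule R K
  star_smul : ∀ x : K, x ≠ 0 → ∀ E : Submodule R K, E ≠ ⊥ →
    star (Submodule.span R {x} * E) = Submodule.span R {x} * star E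
  mono : ∀ E F : Submodule R K, E ≠ ⊥ → E ≤ F → star E ≤ star F
  le_star : ∀ E : Submodule R K, E ≠ ⊥ → E ≤ star E
  idem : ∀ E : Submodule R K, E ≠ ⊥ → star (star E) = star E

section Ops

variable (R K : Type*) [CommRing R] [Field K] [Algebra R K]

/-- The `v`-operation (divisorial closure) `E ↦ (R : (R : E))`. -/
def vop (E : Submodule R K) : Submodule R K := resid R K 1 (resid R K 1 E)

/-- The `t`-operation, the finite-type version of `v`. -/
def top (E : Submodule R K) : Submodule R K :=
  ⨆ (F : Submodule R K) (_ : F.FG ∧ F ≠ ⊥ ∧ F ≤ E), vop R K F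

/-- The `w`-operation `E ↦ ⋃ {(E : F) : F f.g. nonzero with F^t = R}`. -/
def wop (E : Submodule R K) : Submodule R K :=
  ⨆ (F : Submodule R K) (_ : F.FG ∧ F ≠ ⊥ ∧ top R K F = 1), resid R K E F

/-- `M` is a maximal proper `f`-closed ideal (e.g. a `⋆`-maximal ideal). -/
def IsOpMaxIdeal (f : Submodule R K → Submodule R K) (M : Submodule R K) : Prop :=
  M ≠ ⊥ ∧ M < 1 ∧ f M = M ∧
    ∀ J : Submodule R K, J ≠ ⊥ → J < 1 → f J = J → M ≤ J → M = J

/-- The localization `E R_P` of a submodule `E` at a prime `P`, inside `K`. -/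
def locSub (P : Ideal R) (E : Submodule R K) : Submodule R K :=
  Submodule.span R {x : K | ∃ s : R, s ∉ P ∧ s • x ∈ E}

/-- The subring of `K` determined by the submodule `T` is a stable domain:
every nonzero ideal `E` of `T` is invertible in `(E : E)`. -/
def SubringStable (T : Submodule R K) : Prop :=
  ∀ E : Submodule R K, E ≠ ⊥ → E ≤ T → T * E ≤ E →
    E * resid R K (resid R K E E) E = resid R K E E

/-- The subring of `K` determined by `T` is a divisorial domain: every nonzero
fractional ideal of `T` is divisorial. -/
def SubringDivisorial (T : Submodule R K) : Prop :=
  ∀ J : Submodule R K, J ≠ ⊥ → T * J ≤ J →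
    (∃ x : K, x ≠ 0 ∧ ∀ y ∈ J, x * y ∈ T) →
    resid R K T (resid R K T J) = J

/-- The subring of `K` determined by `T` is `v`-coherent: for every nonzero
finitely generated ideal `I = S·T` of `T`, the ideal `(T : I)` is `v`-finite. -/
def SubringVCoherent (T : Submodule R K) : Prop :=
  ∀ S : Submodule R K, S.FG → S ≠ ⊥ → S ≤ T →
    ∃ H : Submodule R K, H.FG ∧ H ≠ ⊥ ∧
      resid R K T (S * T) = resid R K T (resid R K T (H * T))

/-- `R` has finite character with respect to the maximal ideals singled out by `f`. -/
def OpFiniteCharacter (f : Submodule R K → Submodule R K) : Prop :=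
  ∀ I : Submodule R K, I ≠ ⊥ → I ≤ 1 →
    {M : Submodule R K | IsOpMaxIdeal R K f M ∧ I ≤ M}.Finite

/-- Every nonzero finitely generated ideal is `t`-invertible (PvMD). -/
def IsPvMDsub : Prop :=
  ∀ G : Submodule R K, G.FG → G ≠ ⊥ → G ≤ 1 →
    top R K (G * resid R K 1 G) = 1

end Ops

namespace SemistarOp

variable {R K : Type*} [CommRing R] [Field K] [Algebra R K] (s : SemistarOp R K)

/-- `⋆`-stability for the ideals of the subring determined by `T`. -/
def StarStableOver (T : Submodule R K) : Prop :=
  ∀ E : Submodule R K, E ≠ ⊥ → E ≤ T → T * E ≤ E →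
    s.star (s.star E * resid R K (resid R K (s.star E) (s.star E)) (s.star E))
      = resid R K (s.star E) (s.star E)

/-- `R` is `⋆`-stable: each nonzero ideal `I` is such that `I^⋆` is
`⋆̇`-invertible in `(I^⋆ : I^⋆)`. -/
def StarStable : Prop := s.StarStableOver (1 : Submodule R K)

/-- `⋆` is of finite type. -/
def FinType : Prop :=
  ∀ E : Submodule R K, E ≠ ⊥ →
    s.star E = ⨆ (F : Submodule R K) (_ : F.FG ∧ F ≠ ⊥ ∧ F ≤ E), s.star F

/-- `⋆ = ⋆̃`: the operation is spectral and of finite type, i.e. it is given by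
`E^⋆ = ⋃ {(E : F) : F f.g. nonzero with F^⋆ = R}`. -/
def IsSpectralFT : Prop :=
  ∀ E : Submodule R K, E ≠ ⊥ →
    s.star E = ⨆ (F : Submodule R K) (_ : F.FG ∧ F ≠ ⊥ ∧ s.star F = 1), resid R K E F

/-- The `⋆`-integral closure `R^{[⋆]} = ⋃ {(F^⋆ : F^⋆) : F f.g. nonzero}`. -/
def starIntClosure : Submodule R K :=
  ⨆ (F : Submodule R K) (_ : F.FG ∧ F ≠ ⊥), resid R K (s.star F) (s.star F)

end SemistarOp


section MoreOps

variable (R K : Type*) [CommRing R] [Field K] [Algebra R K]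

/-- `R` is `w`-stable: for each nonzero ideal `I`, `I^w` is invertible in
`(I^w : I^w)` with respect to the restriction of `w`. -/
def WStable : Prop :=
  ∀ I : Submodule R K, I ≠ ⊥ → I ≤ 1 →
    wop R K (wop R K I * resid R K (resid R K (wop R K I) (wop R K I)) (wop R K I))
      = resid R K (wop R K I) (wop R K I)

/-- `R` is completely integrally closed in its quotient field `K`. -/
def CICsub : Prop :=
  ∀ x : K, (∃ c : R, c ≠ 0 ∧ ∀ n : ℕ, c • x ^ n ∈ (1 : Submodule R K)) →
    x ∈ (1 : Submodule R K)

/-- `R` is `w`-divisorial: `w = v` on nonzero fractional ideals. -/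
def WDivisorial : Prop :=
  ∀ J : Submodule R K, J ≠ ⊥ →
    (∃ d : R, d ≠ 0 ∧ ∀ x ∈ J, d • x ∈ (1 : Submodule R K)) →
    wop R K J = vop R K J

/-- `R` is a Krull domain: completely integrally closed with the ascending chain
condition on (integral) divisorial ideals. -/
def IsKrullSub : Prop :=
  CICsub R K ∧
    ∀ c : ℕ → Submodule R K,
      (∀ n, c n ≠ ⊥ ∧ c n ≤ 1 ∧ vop R K (c n) = c n) → Monotone c →
        ∃ n, ∀ m, n ≤ m → c m = c n

end MoreOps

end

/-! Complete integral closure gives `(J : J) = R` for every nonzero integral ideal `J`, so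
`⋆`-stability says that `(I (R : I))^⋆ = R` for every nonzero ideal `I`. Such an `I` satisfies
`I^v ⊆ (I : I (R : I)) ⊆ (I^⋆ : R) = I^⋆`, so `⋆ = v` on finitely generated ideals and, `⋆` being
of finite type, `⋆ = t`. Finite type also yields a finitely generated `G ⊆ I (R : I)` with
`1 ∈ G^⋆`. If `I` is the union of a chain of divisorial ideals `I_n`, then `G ⊆ I_n (R : I)` for
some `n`, which gives `(R : I_n) ⊆ (R : I)` and hence `I = I_n`: this is the ACC making `R` Krull.
For `I` finitely generated, `G^t = R` and `x G ⊆ I` for all `x ∈ I^v`, whence `t ≤ w`; conversely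
`w ≤ ⋆` because `(E : F) ⊆ (E^⋆ : F^⋆)`. -/

namespace Submodule

variable {R K : Type*} [CommRing R] [Field K] [Algebra R K]

theorem div_mul_le (A E : Submodule R K) : A / E * E ≤ A :=
  Submodule.le_div_iff_mul_le.mp le_rfl

theorem div_le_div_left (A : Submodule R K) {F F' : Submodule R K} (h : F ≤ F') :
    A / F' ≤ A / F :=
  fun _ hx y hy => hx y (h hy)

theorem div_le_div_right {A A' : Submodule R K} (F : Submodule R K) (h : A ≤ A') :
    A / F ≤ A' / F :=
  fun _ hx y hy => h (hx y hy)

theorem div_one (A : Submodule R K) : A / 1 = A :=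
  le_antisymm (fun x hx => by simpa using hx 1 (one_le.mp le_rfl))
    (Submodule.le_div_iff_mul_le.mpr (mul_one A).le)

theorem le_one_div_one_div (E : Submodule R K) : E ≤ 1 / (1 / E) :=
  Submodule.le_div_iff_mul_le.mpr mul_one_div_le_one

theorem one_div_one_div_one_div (E : Submodule R K) : 1 / (1 / (1 / E)) = 1 / E :=
  le_antisymm (div_le_div_left 1 (le_one_div_one_div E)) (le_one_div_one_div _)

theorem span_singleton_mul_le_iff_mem_div {x : K} {A E : Submodule R K} :
    span R {x} * E ≤ A ↔ x ∈ A / E := by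
  rw [← Submodule.le_div_iff_mul_le, span_singleton_le_iff_mem]

theorem one_ne_bot : (1 : Submodule R K) ≠ ⊥ :=
  (Submodule.ne_bot_iff _).mpr ⟨1, one_le.mp le_rfl, one_ne_zero⟩

theorem one_div_ne_bot_of_le_one {I : Submodule R K} (hI : I ≤ 1) : 1 / I ≠ ⊥ :=
  ne_bot_of_le_ne_bot one_ne_bot (one_le_one_div.mpr hI)

theorem mul_ne_bot {M N : Submodule R K} (hM : M ≠ ⊥) (hN : N ≠ ⊥) : M * N ≠ ⊥ :=
  fun h => (mul_eq_bot.mp h).elim hM hN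

theorem span_singleton_inv_mul_span_singleton {x : K} (hx : x ≠ 0) :
    span R {x⁻¹} * span R {x} = 1 := by
  rw [span_mul_span, Set.singleton_mul_singleton, inv_mul_cancel₀ hx, one_eq_span]

theorem div_span_singleton_mul {x : K} (hx : x ≠ 0) (A E : Submodule R K) :
    A / (span R {x} * E) = span R {x⁻¹} * (A / E) := by
  apply le_antisymm
  · have hmul : span R {x} * (A / (span R {x} * E)) ≤ A / E := by
      rw [Submodule.le_div_iff_mul_le, mul_right_comm, mul_comm _ (A / _)]
      exact div_mul_le _ _
    calc A / (span R {x} * E)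
        = span R {x⁻¹} * span R {x} * (A / (span R {x} * E)) := by
          rw [span_singleton_inv_mul_span_singleton hx, one_mul]
      _ ≤ span R {x⁻¹} * (A / E) := by
          rw [mul_assoc]; exact mul_le_mul' le_rfl hmul
  · rw [Submodule.le_div_iff_mul_le]
    calc span R {x⁻¹} * (A / E) * (span R {x} * E)
        = span R {x⁻¹} * span R {x} * (A / E * E) := by ring
      _ ≤ A := by rw [span_singleton_inv_mul_span_singleton hx, one_mul]; exact div_mul_le A E

theorem span_singleton_mul_mul_one_div {x : K} (hx : x ≠ 0) (F : Submodule R K) :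
    span R {x} * F * (1 / (span R {x} * F)) = F * (1 / F) := by
  rw [div_span_singleton_mul hx]
  calc span R {x} * F * (span R {x⁻¹} * (1 / F))
      = span R {x⁻¹} * span R {x} * (F * (1 / F)) := by ring
    _ = F * (1 / F) := by rw [span_singleton_inv_mul_span_singleton hx, one_mul]

theorem exists_ne_zero_mem_one_div [IsFractionRing R K] {F : Submodule R K} (hF : F.FG) :
    ∃ c : K, c ≠ 0 ∧ c ∈ 1 / F := by
  obtain ⟨a, ha, hint⟩ := FractionalIdeal.isFractional_of_fg (S := nonZeroDivisors R) hF
  refine ⟨algebraMap R K a, (IsLocalization.map_units K ⟨a, ha⟩).ne_zero, fun b hb => ?_⟩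
  obtain ⟨r, hr⟩ := hint b hb
  exact mem_one.mpr ⟨r, by rw [hr, Algebra.smul_def]⟩

theorem one_div_ne_bot_of_fg [IsFractionRing R K] {F : Submodule R K} (hF : F.FG) : 1 / F ≠ ⊥ :=
  have ⟨c, hc, hcF⟩ := exists_ne_zero_mem_one_div hF
  (Submodule.ne_bot_iff _).mpr ⟨c, hcF, hc⟩

end Submodule

open Submodule

section Colon

variable {R K : Type*} [CommRing R] [Field K] [Algebra R K]

theorem resid_eq_div (A F : Submodule R K) : resid R K A F = A / F := rfl

theorem vop_eq_one_div_one_div (E : Submodule R K) : vop R K E = 1 / (1 / E) := rfl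

theorem vop_le_div_mul_one_div (E : Submodule R K) : vop R K E ≤ E / (E * (1 / E)) := by
  rw [Submodule.le_div_iff_mul_le]
  calc vop R K E * (E * (1 / E)) = E * (1 / (1 / E) * (1 / E)) := by
        rw [vop_eq_one_div_one_div]; ring
    _ ≤ E * 1 := mul_le_mul' le_rfl (div_mul_le 1 _)
    _ = E := mul_one E

end Colon

theorem CICsub.div_self_eq_one {R K : Type*} [CommRing R] [Field K] [Algebra R K]
    (hcic : CICsub R K) {E : Submodule R K} (hE : E ≠ ⊥) (hE1 : E ≤ 1) : E / E = 1 := by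
  refine le_antisymm (fun x hx => ?_) (Submodule.le_div_iff_mul_le.mpr (one_mul E).le)
  obtain ⟨y, hy, hy0⟩ := E.ne_bot_iff.mp hE
  obtain ⟨d, rfl⟩ := mem_one.mp (hE1 hy)
  have hpow : ∀ n : ℕ, x ^ n * algebraMap R K d ∈ E := by
    intro n
    induction n with
    | zero => simpa using hy
    | succ n ih => simpa only [pow_succ', mul_assoc] using hx _ ih
  refine hcic x ⟨d, fun hd => hy0 (by rw [hd, map_zero]), fun n => ?_⟩
  rw [Algebra.smul_def, mul_comm]
  exact hE1 (hpow n)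

namespace SemistarOp

variable {R K : Type*} [CommRing R] [Field K] [Algebra R K] (s : SemistarOp R K)

theorem star_ne_bot {E : Submodule R K} (hE : E ≠ ⊥) : s.star E ≠ ⊥ :=
  ne_bot_of_le_ne_bot hE (s.le_star E hE)

theorem div_le_star_div {E : Submodule R K} (hE : E ≠ ⊥) (A : Submodule R K) :
    A / E ≤ s.star A / s.star E := by
  intro x hx
  rcases eq_or_ne x 0 with rfl | hx0
  · exact zero_mem _
  have hstar := s.mono _ _ (mul_ne_bot (span_singleton_eq_bot.not.mpr hx0) hE)
    (span_singleton_mul_le_iff_mem_div.mpr hx)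
  rw [s.star_smul x hx0 E hE] at hstar
  exact fun y hy => hstar (mul_mem_mul (mem_span_singleton_self x) hy)

theorem one_div_star (hone : s.star 1 = 1) {E : Submodule R K} (hE : E ≠ ⊥) :
    1 / s.star E = 1 / E :=
  le_antisymm (div_le_div_left 1 (s.le_star E hE))
    ((s.div_le_star_div hE 1).trans_eq (by rw [hone]))

theorem star_le_vop (hone : s.star 1 = 1) {E : Submodule R K} (hE : E ≠ ⊥) :
    s.star E ≤ vop R K E := by
  rw [vop_eq_one_div_one_div, ← s.one_div_star hone hE]
  exact le_one_div_one_div _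

theorem star_star_mul {A B : Submodule R K} (hA : A ≠ ⊥) (hB : B ≠ ⊥) :
    s.star (s.star A * B) = s.star (A * B) := by
  have hle : s.star A * B ≤ s.star (A * B) := by
    rw [mul_comm, ← Submodule.le_div_iff_mul_le]
    exact (Submodule.le_div_iff_mul_le.mpr (mul_comm B A).le).trans (s.div_le_star_div hA _)
  apply le_antisymm
  · exact (s.mono _ _ (mul_ne_bot (s.star_ne_bot hA) hB) hle).trans_eq
      (s.idem _ (mul_ne_bot hA hB))
  · exact s.mono _ _ (mul_ne_bot hA hB) (mul_le_mul' (s.le_star A hA) le_rfl)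

theorem vop_le_star_of_star_mul_one_div_eq_one {E : Submodule R K} (hE : E * (1 / E) ≠ ⊥)
    (h : s.star (E * (1 / E)) = 1) : vop R K E ≤ s.star E :=
  calc vop R K E ≤ E / (E * (1 / E)) := vop_le_div_mul_one_div E
    _ ≤ s.star E / s.star (E * (1 / E)) := s.div_le_star_div hE E
    _ = s.star E := by rw [h, Submodule.div_one]

theorem le_vop_of_le_mul_one_div (hone : s.star 1 = 1) {I J G : Submodule R K} (hG : G ≠ ⊥)
    (hGJ : G ≤ J * (1 / I)) (h1G : (1 : K) ∈ s.star G) : I ≤ vop R K J := by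
  have hI : 1 / I ≠ ⊥ := by
    rintro h
    rw [h, mul_bot] at hGJ
    exact hG (le_bot_iff.mp hGJ)
  have hJG : 1 / J ≤ (1 / I) / G := by
    rw [Submodule.le_div_iff_mul_le]
    calc 1 / J * G ≤ 1 / J * (J * (1 / I)) := mul_le_mul' le_rfl hGJ
      _ = 1 / J * J * (1 / I) := (mul_assoc _ _ _).symm
      _ ≤ 1 * (1 / I) := mul_le_mul' (div_mul_le 1 J) le_rfl
      _ = 1 / I := one_mul _
  have hJI : 1 / J ≤ 1 / I := fun y hy => by
    have hy1 := s.div_le_star_div hG _ (hJG hy) 1 h1G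
    rw [mul_one] at hy1
    exact ((s.star_le_vop hone hI).trans_eq (one_div_one_div_one_div I)) hy1
  exact (le_one_div_one_div I).trans (div_le_div_left 1 hJI)

theorem FinType.exists_fg_le_of_mem_star {s : SemistarOp R K} (hft : s.FinType)
    {E : Submodule R K} (hE : E ≠ ⊥) {x : K} (hx : x ∈ s.star E) :
    ∃ F : Submodule R K, F.FG ∧ F ≠ ⊥ ∧ F ≤ E ∧ x ∈ s.star F := by
  obtain ⟨y, hy, hy0⟩ := E.ne_bot_iff.mp hE
  have hne : Nonempty {F : Submodule R K // F.FG ∧ F ≠ ⊥ ∧ F ≤ E} :=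
    ⟨⟨span R {y}, fg_span_singleton y, span_singleton_eq_bot.not.mpr hy0,
      (span_singleton_le_iff_mem _ _).mpr hy⟩⟩
  have hdir : Directed (· ≤ ·)
      fun F : {F : Submodule R K // F.FG ∧ F ≠ ⊥ ∧ F ≤ E} => s.star F.1 := by
    rintro ⟨F₁, hF₁⟩ ⟨F₂, hF₂⟩
    have hsup : F₁ ⊔ F₂ ≠ ⊥ := ne_bot_of_le_ne_bot hF₁.2.1 le_sup_left
    exact ⟨⟨F₁ ⊔ F₂, hF₁.1.sup hF₂.1, hsup, sup_le hF₁.2.2 hF₂.2.2⟩,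
      s.mono _ _ hF₁.2.1 le_sup_left, s.mono _ _ hF₂.2.1 le_sup_right⟩
  rw [hft E hE, iSup_subtype', mem_iSup_of_directed _ hdir] at hx
  obtain ⟨⟨F, hFfg, hF, hFE⟩, hxF⟩ := hx
  exact ⟨F, hFfg, hF, hFE, hxF⟩

theorem StarStable.star_mul_one_div_eq_one {s : SemistarOp R K} (hst : s.StarStable)
    (hone : s.star 1 = 1) (hcic : CICsub R K) {I : Submodule R K} (hI : I ≠ ⊥) (hI1 : I ≤ 1) :
    s.star (I * (1 / I)) = 1 := by
  have hinv := hst I hI hI1 (one_mul I).le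
  simp only [resid_eq_div] at hinv
  rw [hcic.div_self_eq_one (s.star_ne_bot hI) (hone ▸ s.mono I 1 hI hI1), s.one_div_star hone hI,
    s.star_star_mul hI (one_div_ne_bot_of_le_one hI1)] at hinv
  exact hinv

theorem vop_chain_stabilizes (hone : s.star 1 = 1) (hft : s.FinType) (hst : s.StarStable)
    (hcic : CICsub R K) (c : ℕ → Submodule R K)
    (hc : ∀ n, c n ≠ ⊥ ∧ c n ≤ 1 ∧ vop R K (c n) = c n) (hmono : Monotone c) :
    ∃ n, ∀ m, n ≤ m → c m = c n := by
  set I := ⨆ n, c n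
  have hI : I ≠ ⊥ := ne_bot_of_le_ne_bot (hc 0).1 (le_iSup c 0)
  have hI1 : I ≤ 1 := iSup_le fun n => (hc n).2.1
  have h1 : (1 : K) ∈ s.star (I * (1 / I)) := by
    rw [hst.star_mul_one_div_eq_one hone hcic hI hI1]
    exact one_le.mp le_rfl
  obtain ⟨G, hGfg, hG, hGI, h1G⟩ :=
    hft.exists_fg_le_of_mem_star (mul_ne_bot hI (one_div_ne_bot_of_le_one hI1)) h1
  obtain ⟨t, ht⟩ := CompleteLattice.IsCompactElement.exists_finset_of_le_iSup _
    ((fg_iff_compact G).mp hGfg) (fun n => c n * (1 / I)) (by rwa [← iSup_mul])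
  set N := t.sup id
  have hGN : G ≤ c N * (1 / I) :=
    ht.trans (iSup₂_le fun n hn => mul_le_mul' (hmono (Finset.le_sup (f := id) hn)) le_rfl)
  have hIN : I ≤ c N := (s.le_vop_of_le_mul_one_div hone hG hGN h1G).trans_eq (hc N).2.2
  exact ⟨N, fun m hNm => le_antisymm ((le_iSup c m).trans hIN) (hmono hNm)⟩

variable [IsFractionRing R K]

theorem StarStable.star_mul_one_div_eq_one_of_fg {s : SemistarOp R K} (hst : s.StarStable)
    (hone : s.star 1 = 1) (hcic : CICsub R K) {F : Submodule R K} (hF : F.FG) (hF0 : F ≠ ⊥) :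
    s.star (F * (1 / F)) = 1 := by
  obtain ⟨c, hc, hcF⟩ := exists_ne_zero_mem_one_div hF
  rw [← span_singleton_mul_mul_one_div hc F]
  exact hst.star_mul_one_div_eq_one hone hcic (mul_ne_bot (span_singleton_eq_bot.not.mpr hc) hF0)
    (span_singleton_mul_le_iff_mem_div.mpr hcF)

theorem star_eq_vop_of_fg (hone : s.star 1 = 1) (hst : s.StarStable) (hcic : CICsub R K)
    {F : Submodule R K} (hF : F.FG) (hF0 : F ≠ ⊥) : s.star F = vop R K F := by
  exact le_antisymm (s.star_le_vop hone hF0) (s.vop_le_star_of_star_mul_one_div_eq_one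
    (mul_ne_bot hF0 (one_div_ne_bot_of_fg hF)) (hst.star_mul_one_div_eq_one_of_fg hone hcic hF hF0))

theorem star_eq_top (hone : s.star 1 = 1) (hft : s.FinType) (hst : s.StarStable)
    (hcic : CICsub R K) {E : Submodule R K} (hE : E ≠ ⊥) : s.star E = top R K E := by
  rw [hft E hE, top]
  exact iSup_congr fun F => iSup_congr fun hF => s.star_eq_vop_of_fg hone hst hcic hF.1 hF.2.1

theorem star_le_wop (hone : s.star 1 = 1) (hft : s.FinType) (hst : s.StarStable)
    (hcic : CICsub R K) {E : Submodule R K} (hE : E ≠ ⊥) : s.star E ≤ wop R K E := by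
  intro x hx
  obtain ⟨F, hFfg, hF, hFE, hxF⟩ := hft.exists_fg_le_of_mem_star hE hx
  have hFinv := hst.star_mul_one_div_eq_one_of_fg hone hcic hFfg hF
  have h1 : (1 : K) ∈ s.star (F * (1 / F)) := by
    rw [hFinv]
    exact one_le.mp le_rfl
  obtain ⟨G, hGfg, hG, hGF, h1G⟩ :=
    hft.exists_fg_le_of_mem_star (mul_ne_bot hF (one_div_ne_bot_of_fg hFfg)) h1
  have hGtop : top R K G = 1 := by
    rw [← s.star_eq_top hone hft hst hcic hG]
    refine le_antisymm ?_ (one_le.mpr h1G)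
    exact (s.mono _ _ hG hGF).trans_eq hFinv
  have hvF : vop R K F ≤ E / G :=
    calc vop R K F ≤ F / (F * (1 / F)) := vop_le_div_mul_one_div F
      _ ≤ F / G := div_le_div_left F hGF
      _ ≤ E / G := div_le_div_right G hFE
  rw [wop]
  simp only [resid_eq_div]
  exact le_iSup₂ (f := fun G _ => E / G) G ⟨hGfg, hG, hGtop⟩ (hvF (s.star_le_vop hone hF hxF))

theorem wop_le_star (hone : s.star 1 = 1) (hft : s.FinType) (hst : s.StarStable)
    (hcic : CICsub R K) (E : Submodule R K) : wop R K E ≤ s.star E := by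
  rw [wop]
  simp only [resid_eq_div]
  exact iSup₂_le fun F ⟨_, hF, hFtop⟩ =>
    calc E / F ≤ s.star E / s.star F := s.div_le_star_div hF E
      _ = s.star E := by rw [s.star_eq_top hone hft hst hcic hF, hFtop, Submodule.div_one]

end SemistarOp

theorem statement_14_general {R K : Type*} [CommRing R] [Field K] [Algebra R K]
    [IsFractionRing R K] (s : SemistarOp R K) (hone : s.star 1 = 1)
    (hft : s.FinType) (hst : s.StarStable) (hcic : CICsub R K) :
    IsKrullSub R K ∧
      ∀ E : Submodule R K, E ≠ ⊥ → s.star E = top R K E ∧ top R K E = wop R K E := by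
  refine ⟨⟨hcic, s.vop_chain_stabilizes hone hft hst hcic⟩, fun E hE => ?_⟩
  have hstar_top := s.star_eq_top hone hft hst hcic hE
  refine ⟨hstar_top, le_antisymm ?_ ?_⟩
  · exact hstar_top ▸ s.star_le_wop hone hft hst hcic hE
  · exact hstar_top ▸ s.wop_le_star hone hft hst hcic E

/-- if `⋆` is a (semi)star operation of finite type and `R` is
`⋆`-stable and completely integrally closed, then `R` is a Krull domain and
`⋆ = t = w`. -/
theorem statement_14 {R K : Type*} [CommRing R] [IsDomain R] [Field K] [Algebra R K]
    [IsFractionRing R K] (s : SemistarOp R K) (hone : s.star 1 = 1)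
    (hft : s.FinType) (hst : s.StarStable) (hcic : CICsub R K) :
    IsKrullSub R K ∧
      ∀ E : Submodule R K, E ≠ ⊥ → s.star E = top R K E ∧ top R K E = wop R K E :=
  statement_14_general s hone hft hst hcic
end

section
/- Let R be an integral domain with t-finite character. Then R is v-coherent if and only if R_M is v-coherent for every t-maximal ideal M of R. -/
set_option linter.unusedSectionVars false
set_option maxHeartbeats 1000000

section Aux
open Submodule
variable {R K : Type*} [CommRing R] [IsDomain R] [Field K] [Algebra R K] [IsFractionRing R K]

theorem mem_resid {E F : Submodule R K} {x : K} :
    x ∈ resid R K E F ↔ ∀ y ∈ F, x * y ∈ E := Iff.rfl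

theorem resid_anti {E F₁ F₂ : Submodule R K} (h : F₁ ≤ F₂) :
    resid R K E F₂ ≤ resid R K E F₁ := fun _ hx y hy => hx y (h hy)

theorem le_resid_resid {E F : Submodule R K} : F ≤ resid R K E (resid R K E F) :=
  fun x hx y hy => by rw [mul_comm]; exact hy x hx

theorem resid_resid_resid {E F : Submodule R K} :
    resid R K E (resid R K E (resid R K E F)) = resid R K E F :=
  le_antisymm (resid_anti le_resid_resid) le_resid_resid

theorem one_mem_one : (1:K) ∈ (1 : Submodule R K) :=
  Submodule.mem_one.mpr ⟨1, map_one _⟩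

theorem algebraMap_mem_one (r : R) : algebraMap R K r ∈ (1 : Submodule R K) :=
  Submodule.mem_one.mpr ⟨r, rfl⟩

theorem mul_mem_one {x y : K} (hx : x ∈ (1 : Submodule R K)) (hy : y ∈ (1 : Submodule R K)) :
    x * y ∈ (1 : Submodule R K) := by
  have := Submodule.mul_mem_mul hx hy
  rwa [Submodule.mul_one] at this

theorem mem_span_singleton_mul_iff {u x : K} (hu : u ≠ 0) {W : Submodule R K} :
    x ∈ Submodule.span R {u} * W ↔ u⁻¹ * x ∈ W := by
  rw [Submodule.mem_span_singleton_mul]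
  constructor
  · rintro ⟨z, hz, rfl⟩
    rwa [inv_mul_cancel_left₀ hu]
  · intro h
    exact ⟨u⁻¹ * x, h, by rw [mul_inv_cancel_left₀ hu]⟩

theorem resid_span_singleton_mul {u : K} (hu : u ≠ 0) {E W : Submodule R K} :
    resid R K E (Submodule.span R {u} * W) = Submodule.span R {u⁻¹} * resid R K E W := by
  ext x
  rw [mem_span_singleton_mul_iff (inv_ne_zero hu), inv_inv, mem_resid, mem_resid]
  constructor
  · intro hx y hy
    have := hx (u * y) (Submodule.mul_mem_mul (Submodule.mem_span_singleton_self u) hy)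
    rw [show x * (u * y) = u * x * y by ring] at this
    exact this
  · intro hx z hz
    rw [mem_span_singleton_mul_iff hu] at hz
    have := hx (u⁻¹ * z) hz
    rw [show u * x * (u⁻¹ * z) = (u * u⁻¹) * (x * z) by ring, mul_inv_cancel₀ hu,
      one_mul] at this
    exact this

theorem span_mul_ne_bot {u : K} (hu : u ≠ 0) {W : Submodule R K} (hW : W ≠ ⊥) :
    Submodule.span R {u} * W ≠ ⊥ := by
  obtain ⟨w, hwW, hw0⟩ := Submodule.exists_mem_ne_zero_of_ne_bot hW
  rw [Submodule.ne_bot_iff]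
  exact ⟨u * w, Submodule.mul_mem_mul (Submodule.mem_span_singleton_self u) hwW,
    mul_ne_zero hu hw0⟩

theorem resid_mul_T {T F : Submodule R K} (h1 : (1:K) ∈ T) (hTT : T * T ≤ T) :
    resid R K T (F * T) = resid R K T F := by
  apply le_antisymm
  · intro x hx y hy
    have := hx (y * 1) (Submodule.mul_mem_mul hy h1)
    rwa [mul_one] at this
  · intro x hx z hz
    refine Submodule.mul_induction_on hz (fun m hm n hn => ?_) (fun a b ha hb => ?_)
    · rw [show x * (m * n) = (x * m) * n by ring]
      exact hTT (Submodule.mul_mem_mul (hx m hm) hn)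
    · rw [mul_add]; exact T.add_mem ha hb

/-! ### `vop` and `top` basics -/

theorem le_vop {E : Submodule R K} : E ≤ vop R K E := le_resid_resid

theorem vop_mono {E F : Submodule R K} (h : E ≤ F) : vop R K E ≤ vop R K F :=
  resid_anti (resid_anti h)

theorem one_mem_resid_one {E : Submodule R K} (hE : E ≤ 1) : (1:K) ∈ resid R K 1 E :=
  fun y hy => by simpa using hE hy

theorem vop_le_one {E : Submodule R K} (hE : E ≤ 1) : vop R K E ≤ 1 := fun x hx => by
  simpa using hx 1 (one_mem_resid_one hE)

theorem vop_vop {E : Submodule R K} : vop R K (vop R K E) = vop R K E :=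
  resid_resid_resid (F := resid R K 1 E)

theorem vop_le_top {E F : Submodule R K} (hF : F.FG ∧ F ≠ ⊥ ∧ F ≤ E) :
    vop R K F ≤ top R K E := by
  have : vop R K F ≤ ⨆ (G : Submodule R K) (_ : G.FG ∧ G ≠ ⊥ ∧ G ≤ E), vop R K G :=
    le_iSup₂ (f := fun (G : Submodule R K) (_ : G.FG ∧ G ≠ ⊥ ∧ G ≤ E) => vop R K G) F hF
  exact this

theorem le_top_self {E : Submodule R K} : E ≤ top R K E := by
  intro x hx
  by_cases hx0 : x = 0
  · rw [hx0]; exact Submodule.zero_mem _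
  · refine vop_le_top ⟨Submodule.fg_span_singleton x, ?_, ?_⟩
      (le_vop (Submodule.mem_span_singleton_self x))
    · simpa [Submodule.span_singleton_eq_bot] using hx0
    · rwa [Submodule.span_le, Set.singleton_subset_iff]

theorem top_mono {E F : Submodule R K} (h : E ≤ F) : top R K E ≤ top R K F := by
  refine iSup₂_le fun G hG => vop_le_top ⟨hG.1, hG.2.1, hG.2.2.trans h⟩

theorem top_le_one {E : Submodule R K} (hE : E ≤ 1) : top R K E ≤ 1 :=
  iSup₂_le fun G hG => vop_le_one (hG.2.2.trans hE)

theorem mem_top_iff {E : Submodule R K} (hE : E ≠ ⊥) {x : K} :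
    x ∈ top R K E ↔ ∃ F : Submodule R K, F.FG ∧ F ≠ ⊥ ∧ F ≤ E ∧ x ∈ vop R K F := by
  constructor
  · intro hx
    obtain ⟨e, heE, he0⟩ := Submodule.exists_mem_ne_zero_of_ne_bot hE
    haveI : Nonempty {F : Submodule R K // F.FG ∧ F ≠ ⊥ ∧ F ≤ E} :=
      ⟨⟨Submodule.span R {e}, Submodule.fg_span_singleton e,
        by simpa [Submodule.span_singleton_eq_bot] using he0,
        by rwa [Submodule.span_le, Set.singleton_subset_iff]⟩⟩
    have hdir : Directed (· ≤ ·)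
        (fun F : {F : Submodule R K // F.FG ∧ F ≠ ⊥ ∧ F ≤ E} => vop R K F.1) := by
      rintro ⟨a, ha⟩ ⟨b, hb⟩
      refine ⟨⟨a ⊔ b, ha.1.sup hb.1, ?_, sup_le ha.2.2 hb.2.2⟩,
        vop_mono le_sup_left, vop_mono le_sup_right⟩
      intro h
      exact ha.2.1 (le_bot_iff.mp (h ▸ le_sup_left))
    have hx' : x ∈ ⨆ F : {F : Submodule R K // F.FG ∧ F ≠ ⊥ ∧ F ≤ E}, vop R K F.1 := by
      rw [iSup_subtype]
      exact hx
    rw [Submodule.mem_iSup_of_directed _ hdir] at hx'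
    obtain ⟨⟨F, hF⟩, hxF⟩ := hx'
    exact ⟨F, hF.1, hF.2.1, hF.2.2, hxF⟩
  · rintro ⟨F, h1, h2, h3, hx⟩
    exact vop_le_top ⟨h1, h2, h3⟩ hx

theorem fg_le_vop_of_le_top {E : Submodule R K} (hE : E ≠ ⊥) (t : Finset K)
    (ht : ∀ x ∈ t, x ∈ top R K E) :
    ∃ G : Submodule R K, G.FG ∧ G ≠ ⊥ ∧ G ≤ E ∧ ∀ x ∈ t, x ∈ vop R K G := by
  classical
  induction t using Finset.induction_on with
  | empty =>
      obtain ⟨e, heE, he0⟩ := Submodule.exists_mem_ne_zero_of_ne_bot hE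
      refine ⟨Submodule.span R {e}, Submodule.fg_span_singleton e,
        by simpa [Submodule.span_singleton_eq_bot] using he0,
        by rwa [Submodule.span_le, Set.singleton_subset_iff], by simp⟩
  | @insert a s ha ih =>
      obtain ⟨G₁, hG₁fg, hG₁b, hG₁E, hG₁⟩ := ih fun x hx => ht x (Finset.mem_insert_of_mem hx)
      obtain ⟨F, hFfg, hFb, hFE, haF⟩ :=
        (mem_top_iff hE).mp (ht a (Finset.mem_insert_self a s))
      refine ⟨G₁ ⊔ F, hG₁fg.sup hFfg, ?_, sup_le hG₁E hFE, ?_⟩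
      · intro h; exact hG₁b (le_bot_iff.mp (h ▸ le_sup_left))
      · intro x hx
        rcases Finset.mem_insert.mp hx with rfl | hx
        · exact vop_mono le_sup_right haF
        · exact vop_mono le_sup_left (hG₁ x hx)

theorem top_idem {E : Submodule R K} (hE : E ≠ ⊥) : top R K (top R K E) = top R K E := by
  apply le_antisymm _ le_top_self
  refine iSup₂_le fun F hF => ?_
  obtain ⟨t, hts⟩ := hF.1
  obtain ⟨G, hGfg, hGb, hGE, hG⟩ := fg_le_vop_of_le_top hE t
    (fun x hx => hF.2.2 (hts ▸ (Submodule.subset_span hx : x ∈ Submodule.span R (↑t : Set K))))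
  have hFG : F ≤ vop R K G := by
    rw [← hts, Submodule.span_le]
    intro x hx
    exact hG x hx
  calc vop R K F ≤ vop R K (vop R K G) := vop_mono hFG
    _ = vop R K G := vop_vop
    _ ≤ top R K E := vop_le_top ⟨hGfg, hGb, hGE⟩

theorem finset_mem_of_sSup {c : Set (Submodule R K)} (hne : c.Nonempty)
    (hdir : DirectedOn (· ≤ ·) c) (t : Finset K) (ht : ∀ x ∈ t, x ∈ sSup c) :
    ∃ z ∈ c, ∀ x ∈ t, x ∈ z := by
  classical
  induction t using Finset.induction_on with
  | empty => obtain ⟨y, hy⟩ := hne; exact ⟨y, hy, by simp⟩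
  | @insert a s ha ih =>
      obtain ⟨z₁, hz₁, h₁⟩ := ih fun x hx => ht x (Finset.mem_insert_of_mem hx)
      have ha' : a ∈ sSup c := ht a (Finset.mem_insert_self a s)
      rw [Submodule.mem_sSup_of_directed hne hdir] at ha'
      obtain ⟨z₂, hz₂, h₂⟩ := ha'
      obtain ⟨z, hz, hz₁le, hz₂le⟩ := hdir z₁ hz₁ z₂ hz₂
      refine ⟨z, hz, fun x hx => ?_⟩
      rcases Finset.mem_insert.mp hx with rfl | hx
      · exact hz₂le h₂
      · exact hz₁le (h₁ x hx)

theorem exists_tmax {J : Submodule R K} (hJb : J ≠ ⊥) (hJ1 : top R K J < 1) :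
    ∃ M, IsOpMaxIdeal R K (top R K) M ∧ J ≤ M := by
  have hx₀ : top R K J ∈ {C : Submodule R K | C ≠ ⊥ ∧ top R K C = C ∧ C < 1} :=
    ⟨fun h => hJb (le_bot_iff.mp (h ▸ le_top_self)), top_idem hJb, hJ1⟩
  have hub : ∀ c ⊆ {C : Submodule R K | C ≠ ⊥ ∧ top R K C = C ∧ C < 1},
      IsChain (· ≤ ·) c → ∀ y ∈ c,
      ∃ ub ∈ {C : Submodule R K | C ≠ ⊥ ∧ top R K C = C ∧ C < 1}, ∀ z ∈ c, z ≤ ub := by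
    intro c hc hchain y hy
    refine ⟨sSup c, ⟨?_, ?_, ?_⟩, fun z hz => le_sSup hz⟩
    · intro h
      exact (hc hy).1 (le_bot_iff.mp (h ▸ le_sSup hy))
    · apply le_antisymm _ le_top_self
      refine iSup₂_le fun F hF => ?_
      obtain ⟨t, hts⟩ := hF.1
      obtain ⟨z, hzc, hz⟩ := finset_mem_of_sSup ⟨y, hy⟩ hchain.directedOn t
        (fun x hx => hF.2.2 (hts ▸ (Submodule.subset_span hx : x ∈ Submodule.span R (↑t : Set K))))
      have hFz : F ≤ z := by
        rw [← hts, Submodule.span_le]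
        intro x hx
        exact hz x hx
      calc vop R K F ≤ top R K z := vop_le_top ⟨hF.1, hF.2.1, hFz⟩
        _ = z := (hc hzc).2.1
        _ ≤ sSup c := le_sSup hzc
    · have hle1 : sSup c ≤ 1 := sSup_le fun z hz => (hc hz).2.2.le
      refine lt_of_le_of_ne hle1 fun h => ?_
      have h1 : (1:K) ∈ sSup c := h ▸ one_mem_one
      rw [Submodule.mem_sSup_of_directed ⟨y, hy⟩ hchain.directedOn] at h1
      obtain ⟨z, hz, h1z⟩ := h1
      exact (hc hz).2.2.ne (le_antisymm (hc hz).2.2.le (Submodule.one_le.mpr h1z))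
  obtain ⟨m, hm0, hm⟩ := zorn_le_nonempty₀ _ hub _ hx₀
  exact ⟨m, ⟨hm.1.1, hm.1.2.2, hm.1.2.1,
    fun J' hb h1 ht hle => le_antisymm hle (hm.2 ⟨hb, ht, h1⟩ hle)⟩,
    le_top_self.trans hm0⟩

/-! ### `t`-maximal ideals are prime -/

theorem vop_span_mul {u : K} (hu : u ≠ 0) (F : Submodule R K) :
    vop R K (Submodule.span R {u} * F) = Submodule.span R {u} * vop R K F := by
  show resid R K 1 (resid R K 1 (Submodule.span R {u} * F)) = _
  rw [resid_span_singleton_mul hu, resid_span_singleton_mul (inv_ne_zero hu), inv_inv]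
  rfl

theorem span_mul_top_le {y : K} (hy : y ≠ 0) {E : Submodule R K} (hE : E ≠ ⊥) :
    Submodule.span R {y} * top R K E ≤ top R K (Submodule.span R {y} * E) := by
  rw [Submodule.mul_le]
  intro m hm b hb
  obtain ⟨c, rfl⟩ := Submodule.mem_span_singleton.mp hm
  obtain ⟨F, hFfg, hFb, hFE, hbF⟩ := (mem_top_iff hE).mp hb
  have h1 : y * b ∈ vop R K (Submodule.span R {y} * F) := by
    rw [vop_span_mul hy]
    exact Submodule.mul_mem_mul (Submodule.mem_span_singleton_self y) hbF
  have h2 : vop R K (Submodule.span R {y} * F) ≤ top R K (Submodule.span R {y} * E) :=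
    vop_le_top ⟨(Submodule.fg_span_singleton y).mul hFfg, span_mul_ne_bot hy hFb,
      mul_le_mul' le_rfl hFE⟩
  rw [smul_mul_assoc]
  exact Submodule.smul_mem _ c (h2 h1)

theorem span_mul_le_of_mem_one {y : K} (hy1 : y ∈ (1 : Submodule R K)) {M : Submodule R K} :
    Submodule.span R {y} * M ≤ M := by
  rw [Submodule.mul_le]
  intro m hm n hn
  obtain ⟨c, rfl⟩ := Submodule.mem_span_singleton.mp hm
  obtain ⟨r, rfl⟩ := Submodule.mem_one.mp hy1
  rw [smul_mul_assoc, ← Algebra.smul_def]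
  exact M.smul_mem c (M.smul_mem r hn)

theorem tmax_mul_mem {M : Submodule R K} (hM : IsOpMaxIdeal R K (top R K) M)
    {x y : K} (hx1 : x ∈ (1 : Submodule R K)) (hy1 : y ∈ (1 : Submodule R K))
    (hxy : x * y ∈ M) (hx : x ∉ M) : y ∈ M := by
  by_cases hy0 : y = 0
  · rw [hy0]; exact M.zero_mem
  have hsb : M ⊔ Submodule.span R {x} ≠ ⊥ := fun h => hM.1 (le_bot_iff.mp (h ▸ le_sup_left))
  have hle1 : M ⊔ Submodule.span R {x} ≤ 1 :=
    sup_le hM.2.1.le (by rwa [Submodule.span_le, Set.singleton_subset_iff])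
  have htop1 : top R K (M ⊔ Submodule.span R {x}) = 1 := by
    rcases lt_or_eq_of_le (top_le_one hle1) with hlt | heq
    · exfalso
      have hMtb : top R K (M ⊔ Submodule.span R {x}) ≠ ⊥ :=
        fun h => hsb (le_bot_iff.mp (h ▸ le_top_self))
      have hMeq := hM.2.2.2 _ hMtb hlt (top_idem hsb) (le_sup_left.trans le_top_self)
      have hxM : x ∈ top R K (M ⊔ Submodule.span R {x}) :=
        (le_sup_right.trans le_top_self) (Submodule.mem_span_singleton_self x)
      rw [← hMeq] at hxM
      exact hx hxM
    · exact heq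
  have hy' : y ∈ Submodule.span R {y} * (1 : Submodule R K) := by
    have := Submodule.mul_mem_mul (Submodule.mem_span_singleton_self y)
      (one_mem_one (R := R) (K := K))
    rwa [mul_one y] at this
  rw [← htop1] at hy'
  have h1 := span_mul_top_le hy0 hsb hy'
  have h2 : Submodule.span R {y} * (M ⊔ Submodule.span R {x}) ≤ M := by
    rw [Submodule.mul_sup]
    refine sup_le (span_mul_le_of_mem_one hy1) ?_
    rw [Submodule.span_mul_span, Set.singleton_mul_singleton, Submodule.span_le,
      Set.singleton_subset_iff, mul_comm]
    exact hxy
  have h3 : top R K (Submodule.span R {y} * (M ⊔ Submodule.span R {x})) ≤ M := by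
    calc top R K _ ≤ top R K M := top_mono h2
      _ = M := hM.2.2.1
  exact h3 h1

theorem tmax_comap_prime {M : Submodule R K} (hM : IsOpMaxIdeal R K (top R K) M) :
    Ideal.IsPrime (Submodule.comap (Algebra.linearMap R K) M) := by
  constructor
  · intro h
    have h1 : (1:R) ∈ M.comap (Algebra.linearMap R K) := h ▸ Submodule.mem_top
    have h2 : (1:K) ∈ M := by simpa using h1
    exact hM.2.1.ne (le_antisymm hM.2.1.le (Submodule.one_le.mpr h2))
  · intro a b hab
    rw [Submodule.mem_comap, Algebra.linearMap_apply, map_mul] at hab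
    by_cases ha : algebraMap R K a ∈ M
    · exact Or.inl (Submodule.mem_comap.mpr (by simpa using ha))
    · refine Or.inr (Submodule.mem_comap.mpr ?_)
      have h3 := tmax_mul_mem hM (algebraMap_mem_one a) (algebraMap_mem_one b) hab ha
      simpa using h3

/-! ### the localization `R_P` inside `K` -/

theorem mem_locSub_one {P : Ideal R} (hP : P.IsPrime) {x : K} :
    x ∈ locSub R K P 1 ↔ ∃ s, s ∉ P ∧ s • x ∈ (1 : Submodule R K) := by
  classical
  let W : Submodule R K :=
    { carrier := {x : K | ∃ s, s ∉ P ∧ s • x ∈ (1 : Submodule R K)}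
      add_mem' := by
        rintro a b ⟨s, hs, hsa⟩ ⟨t, ht, htb⟩
        refine ⟨s * t, fun h => (hP.mem_or_mem h).elim hs ht, ?_⟩
        rw [smul_add]
        refine Submodule.add_mem _ ?_ ?_
        · rw [mul_comm, mul_smul]; exact Submodule.smul_mem _ t hsa
        · rw [mul_smul]; exact Submodule.smul_mem _ s htb
      zero_mem' := ⟨1, (Ideal.ne_top_iff_one _).mp hP.ne_top, by simp⟩
      smul_mem' := by
        rintro c x ⟨s, hs, hsx⟩
        exact ⟨s, hs, by rw [smul_comm]; exact Submodule.smul_mem _ c hsx⟩ }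
  have hW : locSub R K P 1 = W :=
    le_antisymm (Submodule.span_le.mpr fun z hz => hz) Submodule.subset_span
  rw [hW]
  exact Iff.rfl

theorem one_le_locSub {P : Ideal R} (hP : P.IsPrime) :
    (1 : Submodule R K) ≤ locSub R K P 1 := fun x hx =>
  Submodule.subset_span ⟨1, (Ideal.ne_top_iff_one _).mp hP.ne_top, by simpa using hx⟩

theorem one_mem_locSub {P : Ideal R} (hP : P.IsPrime) : (1:K) ∈ locSub R K P 1 :=
  one_le_locSub hP one_mem_one

theorem locSub_mul_le {P : Ideal R} (hP : P.IsPrime) :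
    locSub R K P 1 * locSub R K P 1 ≤ locSub R K P 1 := by
  rw [Submodule.mul_le]
  intro m hm n hn
  rw [mem_locSub_one hP] at hm hn ⊢
  obtain ⟨s, hs, hsm⟩ := hm
  obtain ⟨t, ht, htn⟩ := hn
  refine ⟨s * t, fun h => (hP.mem_or_mem h).elim hs ht, ?_⟩
  have := mul_mem_one hsm htn
  rwa [smul_mul_smul_comm] at this

theorem ne_zero_of_notMem {P : Ideal R} {s : R} (hs : s ∉ P) : s ≠ 0 :=
  fun h => hs (h ▸ P.zero_mem)

theorem algebraMap_ne_zero' {s : R} (hs : s ≠ 0) : algebraMap R K s ≠ 0 := fun h =>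
  hs (IsFractionRing.injective R K (by rw [h, map_zero]))

theorem exists_smul_mem_one {P : Ideal R} (hP : P.IsPrime) {W : Submodule R K} (hW : W.FG)
    (hle : W ≤ locSub R K P 1) :
    ∃ s, s ∉ P ∧ ∀ w ∈ W, s • w ∈ (1 : Submodule R K) := by
  classical
  obtain ⟨t, rfl⟩ := hW
  have hmem : ∀ y : K, y ∈ t → ∃ s, s ∉ P ∧ s • y ∈ (1 : Submodule R K) := fun y hy =>
    (mem_locSub_one hP).mp (hle (Submodule.subset_span hy))
  choose g hg1 hg2 using hmem
  refine ⟨∏ y ∈ t.attach, g y.1 y.2, ?_, ?_⟩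
  · exact Finset.prod_induction _ (fun a => a ∉ P)
      (fun a b ha hb h => (hP.mem_or_mem h).elim ha hb)
      ((Ideal.ne_top_iff_one _).mp hP.ne_top) (fun a _ => hg1 a.1 a.2)
  · intro w hw
    set s := ∏ y ∈ t.attach, g y.1 y.2 with hs
    have hVle : Submodule.span R (↑t : Set K) ≤
        (1 : Submodule R K).comap (LinearMap.lsmul R K s) := by
      rw [Submodule.span_le]
      intro y hy
      have hyt : y ∈ t := hy
      simp only [SetLike.mem_coe, Submodule.mem_comap, LinearMap.lsmul_apply]
      have hy' : (⟨y, hyt⟩ : {x // x ∈ t}) ∈ t.attach := Finset.mem_attach _ _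
      have hprod := Finset.mul_prod_erase t.attach (fun z => g z.1 z.2) hy'
      rw [hs, ← hprod, mul_comm, mul_smul]
      exact Submodule.smul_mem _ _ (hg2 y hyt)
    have := hVle hw
    simpa using this

theorem inv_algebraMap_mem_locSub {P : Ideal R} (hP : P.IsPrime) {s : R} (hs : s ∉ P) :
    (algebraMap R K s)⁻¹ ∈ locSub R K P 1 := by
  rw [mem_locSub_one hP]
  refine ⟨s, hs, ?_⟩
  rw [Algebra.smul_def, mul_inv_cancel₀ (algebraMap_ne_zero' (ne_zero_of_notMem hs))]
  exact one_mem_one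

theorem span_algebraMap_mul_locSub {P : Ideal R} (hP : P.IsPrime) {s : R} (hs : s ∉ P) :
    Submodule.span R {algebraMap R K s} * locSub R K P 1 = locSub R K P 1 := by
  apply le_antisymm
  · rw [Submodule.mul_le]
    intro m hm n hn
    obtain ⟨c, rfl⟩ := Submodule.mem_span_singleton.mp hm
    rw [smul_mul_assoc]
    exact Submodule.smul_mem _ c
      (locSub_mul_le hP (Submodule.mul_mem_mul (one_le_locSub hP (algebraMap_mem_one s)) hn))
  · intro x hx
    have h1 : (algebraMap R K s)⁻¹ * x ∈ locSub R K P 1 :=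
      locSub_mul_le hP (Submodule.mul_mem_mul (inv_algebraMap_mem_locSub hP hs) hx)
    have := Submodule.mul_mem_mul
      (Submodule.mem_span_singleton_self (algebraMap R K s)) h1
    rwa [mul_inv_cancel_left₀ (algebraMap_ne_zero' (ne_zero_of_notMem hs))] at this

theorem resid_locSub_fg {P : Ideal R} (hP : P.IsPrime) {H : Submodule R K} (hH : H.FG) :
    resid R K (locSub R K P 1) H = resid R K 1 H * locSub R K P 1 := by
  apply le_antisymm
  · intro x hx
    have hWfg : (Submodule.span R {x} * H).FG := (Submodule.fg_span_singleton x).mul hH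
    have hWle : Submodule.span R {x} * H ≤ locSub R K P 1 := by
      rw [Submodule.mul_le]
      intro m hm n hn
      obtain ⟨c, rfl⟩ := Submodule.mem_span_singleton.mp hm
      rw [smul_mul_assoc]
      exact Submodule.smul_mem _ c (hx n hn)
    obtain ⟨s, hs, hsW⟩ := exists_smul_mem_one hP hWfg hWle
    have hsx : s • x ∈ resid R K 1 H := by
      intro y hy
      rw [smul_mul_assoc]
      exact hsW _ (Submodule.mul_mem_mul (Submodule.mem_span_singleton_self x) hy)
    have := Submodule.mul_mem_mul hsx (inv_algebraMap_mem_locSub hP hs)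
    rwa [Algebra.smul_def, mul_comm (algebraMap R K s) x, mul_assoc,
      mul_inv_cancel₀ (algebraMap_ne_zero' (ne_zero_of_notMem hs)), mul_one] at this
  · rw [Submodule.mul_le]
    intro m hm n hn y hy
    rw [show m * n * y = m * y * n by ring]
    exact locSub_mul_le hP (Submodule.mul_mem_mul (one_le_locSub hP (hm y hy)) hn)

/-! ### `R = ⋂ R_M` over the `t`-maximal ideals -/

theorem mem_one_of_forall_tmax {x : K}
    (h : ∀ M : Submodule R K, IsOpMaxIdeal R K (top R K) M →
      x ∈ locSub R K (M.comap (Algebra.linearMap R K)) 1) :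
    x ∈ (1 : Submodule R K) := by
  obtain ⟨⟨a, s⟩, hx⟩ := IsLocalization.surj (nonZeroDivisors R) x
  set J : Submodule R K := (1 : Submodule R K) ⊓ Submodule.comap (LinearMap.mulLeft R x) 1
    with hJdef
  have hmemJ : ∀ z, z ∈ J ↔ z ∈ (1 : Submodule R K) ∧ x * z ∈ (1 : Submodule R K) := by
    intro z
    rw [hJdef, Submodule.mem_inf, Submodule.mem_comap, LinearMap.mulLeft_apply]
  have hsK : algebraMap R K (s : R) ≠ 0 :=
    algebraMap_ne_zero' (nonZeroDivisors.ne_zero s.2)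
  have hsJ : algebraMap R K (s : R) ∈ J := (hmemJ _).mpr
    ⟨algebraMap_mem_one _, by rw [hx]; exact algebraMap_mem_one _⟩
  have hJb : J ≠ ⊥ := by
    rw [Submodule.ne_bot_iff]
    exact ⟨_, hsJ, hsK⟩
  by_cases h1 : (1:K) ∈ top R K J
  · obtain ⟨F, hFfg, hFb, hFJ, h1F⟩ := (mem_top_iff hJb).mp h1
    have hxF : x ∈ resid R K 1 F := fun y hy => ((hmemJ y).mp (hFJ hy)).2
    have := h1F x hxF
    rwa [one_mul] at this
  · have hlt : top R K J < 1 :=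
      lt_of_le_of_ne (top_le_one inf_le_left) (fun he => h1 (he ▸ one_mem_one))
    obtain ⟨M, hM, hJM⟩ := exists_tmax hJb hlt
    have hP := tmax_comap_prime hM
    obtain ⟨s', hs', hsx⟩ := (mem_locSub_one hP).mp (h M hM)
    have hsJ' : algebraMap R K s' ∈ J := (hmemJ _).mpr
      ⟨algebraMap_mem_one _, by rw [mul_comm, ← Algebra.smul_def]; exact hsx⟩
    exact absurd (Submodule.mem_comap.mpr (by simpa using hJM hsJ')) hs'



/-! ### the two directions -/

theorem le_self_mul_T {W T : Submodule R K} (h1 : (1:K) ∈ T) : W ≤ W * T := fun w hw => by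
  have := Submodule.mul_mem_mul hw h1
  rwa [mul_one] at this

theorem forward_vcoh (hv : SubringVCoherent R K 1) {M : Submodule R K}
    (hM : IsOpMaxIdeal R K (top R K) M) :
    SubringVCoherent R K (locSub R K (M.comap (Algebra.linearMap R K)) 1) := by
  have hP := tmax_comap_prime hM
  set T := locSub R K (M.comap (Algebra.linearMap R K)) 1 with hT
  have h1T : (1:K) ∈ T := one_mem_locSub hP
  have hTT : T * T ≤ T := locSub_mul_le hP
  intro S hSfg hSne hST
  obtain ⟨s, hs, hsS⟩ := exists_smul_mem_one hP hSfg hST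
  set u : K := algebraMap R K s with hu
  have hu0 : u ≠ 0 := algebraMap_ne_zero' (ne_zero_of_notMem hs)
  set S' : Submodule R K := Submodule.span R {u} * S with hS'def
  have hS'fg : S'.FG := (Submodule.fg_span_singleton u).mul hSfg
  have hS'ne : S' ≠ ⊥ := span_mul_ne_bot hu0 hSne
  have hS'le1 : S' ≤ 1 := by
    rw [hS'def, Submodule.mul_le]
    intro m hm n hn
    obtain ⟨c, rfl⟩ := Submodule.mem_span_singleton.mp hm
    rw [smul_mul_assoc, hu, ← Algebra.smul_def]
    exact Submodule.smul_mem _ c (hsS n hn)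
  obtain ⟨H, hHfg, hHne, hHeq⟩ := hv S' hS'fg hS'ne hS'le1
  rw [Submodule.mul_one, Submodule.mul_one] at hHeq
  -- S' is contained in `(R : H)` and in `(R : (R : H))`
  have hS'H : S' ≤ resid R K 1 H := by
    have h1 := le_resid_resid (E := (1 : Submodule R K)) (F := S')
    rw [hHeq, resid_resid_resid] at h1
    exact h1
  have hS'v : S' ≤ resid R K 1 (resid R K 1 H) := by
    rw [← hHeq]
    intro a ha b hb
    exact mul_mem_one (hS'le1 ha) (hS'le1 hb)
  -- main equality
  have hmain : resid R K T (S' * T) = resid R K T (resid R K T (H * T)) := by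
    rw [resid_mul_T h1T hTT, resid_mul_T h1T hTT, resid_locSub_fg hP hS'fg,
      resid_locSub_fg hP hHfg]
    apply le_antisymm
    · rw [Submodule.mul_le]
      intro m hm n hn z hz
      refine Submodule.mul_induction_on hz (fun v hv' w hw => ?_) (fun a b ha hb => ?_)
      · rw [show m * n * (v * w) = (m * v) * (n * w) by ring]
        have hmv : m * v ∈ (1 : Submodule R K) := by
          rw [hHeq] at hm
          exact hm v hv'
        exact hTT (Submodule.mul_mem_mul (one_le_locSub hP hmv)
          (hTT (Submodule.mul_mem_mul hn hw)))
      · rw [mul_add]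
        exact T.add_mem ha hb
    · have h2 : resid R K T (resid R K 1 H * T) ≤ resid R K T S' :=
        resid_anti (hS'H.trans (le_self_mul_T h1T))
      rw [resid_locSub_fg hP hS'fg] at h2
      exact h2
  -- scaling back from `S'` to `S`
  have hspan : Submodule.span R {u⁻¹} * Submodule.span R {u} = (1 : Submodule R K) := by
    rw [Submodule.span_mul_span, Set.singleton_mul_singleton, inv_mul_cancel₀ hu0]
    exact (Submodule.one_eq_span).symm
  have e1 : Submodule.span R {u⁻¹} * (S' * T) = S * T := by
    rw [hS'def, ← mul_assoc, ← mul_assoc, hspan, one_mul]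
  refine ⟨Submodule.span R {u} * H, (Submodule.fg_span_singleton u).mul hHfg,
    span_mul_ne_bot hu0 hHne, ?_⟩
  have r0 : resid R K T (Submodule.span R {u} * H * T)
      = Submodule.span R {u⁻¹} * resid R K T (H * T) := by
    rw [mul_assoc (Submodule.span R {u}) H T]
    exact resid_span_singleton_mul hu0
  calc resid R K T (S * T)
      = resid R K T (Submodule.span R {u⁻¹} * (S' * T)) := by rw [e1]
    _ = Submodule.span R {u⁻¹⁻¹} * resid R K T (S' * T) :=
        resid_span_singleton_mul (inv_ne_zero hu0)
    _ = Submodule.span R {u⁻¹⁻¹} * resid R K T (resid R K T (H * T)) := by rw [hmain]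
    _ = resid R K T (Submodule.span R {u⁻¹} * resid R K T (H * T)) :=
        (resid_span_singleton_mul (inv_ne_zero hu0)).symm
    _ = resid R K T (resid R K T (Submodule.span R {u} * H * T)) := by rw [r0]

theorem backward_vcoh (hfc : OpFiniteCharacter R K (top R K))
    (hloc : ∀ M : Submodule R K, IsOpMaxIdeal R K (top R K) M →
      SubringVCoherent R K (locSub R K (M.comap (Algebra.linearMap R K)) 1)) :
    SubringVCoherent R K 1 := by
  classical
  intro S hSfg hSne hS1
  have hkey : ∀ M : Submodule R K, IsOpMaxIdeal R K (top R K) M →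
      ∃ G : Submodule R K, G.FG ∧ G ≠ ⊥ ∧
        (∀ g ∈ G, ∀ y ∈ S, g * y ∈ (1 : Submodule R K)) ∧
        resid R K (locSub R K (M.comap (Algebra.linearMap R K)) 1)
            (S * locSub R K (M.comap (Algebra.linearMap R K)) 1) =
          resid R K (locSub R K (M.comap (Algebra.linearMap R K)) 1)
            (resid R K (locSub R K (M.comap (Algebra.linearMap R K)) 1)
              (G * locSub R K (M.comap (Algebra.linearMap R K)) 1)) := by
    intro M hM
    have hP := tmax_comap_prime hM
    set T := locSub R K (M.comap (Algebra.linearMap R K)) 1 with hT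
    obtain ⟨H, hHfg, hHb, hHeq⟩ := hloc M hM S hSfg hSne (hS1.trans (one_le_locSub hP))
    have hHS : H * S ≤ T := by
      rw [Submodule.mul_le]
      intro h hh y hy
      have h1 : h ∈ H * T := by
        have := Submodule.mul_mem_mul hh (one_mem_locSub hP)
        rwa [mul_one] at this
      have h2 : H * T ≤ resid R K T (S * T) := by
        rw [hHeq]
        exact le_resid_resid
      have h3 : y * 1 ∈ S * T := Submodule.mul_mem_mul hy (one_mem_locSub hP)
      have h4 := h2 h1 (y * 1) h3
      rwa [mul_one] at h4
    obtain ⟨s, hs, hsHS⟩ := exists_smul_mem_one hP (hHfg.mul hSfg) hHS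
    have hu0 : algebraMap R K s ≠ 0 := algebraMap_ne_zero' (ne_zero_of_notMem hs)
    have h5 : Submodule.span R {algebraMap R K s} * T = T := by
      rw [hT]
      exact span_algebraMap_mul_locSub hP hs
    refine ⟨Submodule.span R {algebraMap R K s} * H,
      (Submodule.fg_span_singleton _).mul hHfg, span_mul_ne_bot hu0 hHb, ?_, ?_⟩
    · intro g hg y hy
      refine Submodule.mul_induction_on hg (fun m hm h hh => ?_) (fun a b ha hb => ?_)
      · obtain ⟨c, rfl⟩ := Submodule.mem_span_singleton.mp hm
        rw [smul_mul_assoc, smul_mul_assoc]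
        refine Submodule.smul_mem _ c ?_
        rw [mul_assoc, ← Algebra.smul_def]
        exact hsHS _ (Submodule.mul_mem_mul hh hy)
      · rw [add_mul]
        exact Submodule.add_mem _ ha hb
    · have h6 : Submodule.span R {algebraMap R K s} * H * T = H * T := by
        rw [mul_assoc, mul_comm H T, ← mul_assoc, h5, mul_comm]
      rw [h6]
      exact hHeq
  have hkey' : ∀ M : Submodule R K, ∃ G : Submodule R K,
      IsOpMaxIdeal R K (top R K) M →
      (G.FG ∧ G ≠ ⊥ ∧ (∀ g ∈ G, ∀ y ∈ S, g * y ∈ (1 : Submodule R K)) ∧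
        resid R K (locSub R K (M.comap (Algebra.linearMap R K)) 1)
            (S * locSub R K (M.comap (Algebra.linearMap R K)) 1) =
          resid R K (locSub R K (M.comap (Algebra.linearMap R K)) 1)
            (resid R K (locSub R K (M.comap (Algebra.linearMap R K)) 1)
              (G * locSub R K (M.comap (Algebra.linearMap R K)) 1))) := by
    intro M
    by_cases h : IsOpMaxIdeal R K (top R K) M
    · exact ⟨(hkey M h).choose, fun _ => (hkey M h).choose_spec⟩
    · exact ⟨⊥, fun h' => absurd h' h⟩
  choose G hG using hkey'
  obtain ⟨Φ, hΦ⟩ : ∃ Φ : Finset (Submodule R K),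
      ∀ N, N ∈ Φ ↔ (IsOpMaxIdeal R K (top R K) N ∧ S ≤ N) :=
    ⟨(hfc S hSne hS1).toFinset, fun N => Set.Finite.mem_toFinset _⟩
  refine ⟨S ⊔ Φ.sup G, ?_, ?_, ?_⟩
  · refine Submodule.FG.sup hSfg ?_
    refine Finset.sup_induction Submodule.fg_bot (fun a₁ h₁ a₂ h₂ => h₁.sup h₂)
      (fun N hNΦ => ?_)
    exact (hG N ((hΦ N).mp hNΦ).1).1
  · intro h
    exact hSne (le_bot_iff.mp (h ▸ (le_sup_left : S ≤ S ⊔ Φ.sup G)))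
  · rw [Submodule.mul_one, Submodule.mul_one]
    apply le_antisymm
    · -- (R : S) ≤ (R : (R : H))
      intro y hy z hz
      apply mem_one_of_forall_tmax
      intro N hN
      have hPN := tmax_comap_prime hN
      by_cases hSN : S ≤ N
      · have hNΦ : N ∈ Φ := (hΦ N).mpr ⟨hN, hSN⟩
        have hGN := hG N hN
        have hGH : G N ≤ S ⊔ Φ.sup G := le_sup_of_le_right (Finset.le_sup hNΦ)
        have hzG : z ∈ resid R K (locSub R K (N.comap (Algebra.linearMap R K)) 1)
            (G N * locSub R K (N.comap (Algebra.linearMap R K)) 1) := by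
          intro w hw
          refine Submodule.mul_induction_on hw (fun g hg t ht => ?_) (fun a b ha hb => ?_)
          · rw [show z * (g * t) = (z * g) * t by ring]
            exact locSub_mul_le hPN
              (Submodule.mul_mem_mul (one_le_locSub hPN (hz g (hGH hg))) ht)
          · rw [mul_add]
            exact Submodule.add_mem _ ha hb
        have hyS : y ∈ resid R K (locSub R K (N.comap (Algebra.linearMap R K)) 1)
            (S * locSub R K (N.comap (Algebra.linearMap R K)) 1) := by
          intro w hw
          refine Submodule.mul_induction_on hw (fun a ha t ht => ?_) (fun a b ha hb => ?_)
          · rw [show y * (a * t) = (y * a) * t by ring]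
            exact locSub_mul_le hPN
              (Submodule.mul_mem_mul (one_le_locSub hPN (hy a ha)) ht)
          · rw [mul_add]
            exact Submodule.add_mem _ ha hb
        rw [hGN.2.2.2] at hyS
        exact hyS z hzG
      · obtain ⟨a, haS, haN⟩ := SetLike.not_le_iff_exists.mp hSN
        obtain ⟨c, rfl⟩ := Submodule.mem_one.mp (hS1 haS)
        have hcP : c ∉ N.comap (Algebra.linearMap R K) := fun h => haN (by simpa using h)
        rw [mem_locSub_one hPN]
        refine ⟨c * c, fun h => (hPN.mem_or_mem h).elim hcP hcP, ?_⟩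
        have h1 : y * algebraMap R K c ∈ (1 : Submodule R K) := hy _ haS
        have h2 : z * algebraMap R K c ∈ (1 : Submodule R K) :=
          hz _ ((le_sup_left : S ≤ S ⊔ Φ.sup G) haS)
        have h3 := mul_mem_one h1 h2
        rw [show y * algebraMap R K c * (z * algebraMap R K c)
            = algebraMap R K c * (algebraMap R K c * (y * z)) by ring] at h3
        rwa [← Algebra.smul_def, ← Algebra.smul_def, ← mul_smul] at h3
    · -- (R : (R : H)) ≤ (R : S)
      have hHle : S ⊔ Φ.sup G ≤ resid R K 1 S := by
        refine sup_le (fun a ha y hy => mul_mem_one (hS1 ha) (hS1 hy)) ?_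
        refine Finset.sup_le fun N hNΦ => ?_
        intro g hg y hy
        exact (hG N ((hΦ N).mp hNΦ).1).2.2.1 g hg y hy
      intro w hw y hy
      have hyH : y ∈ resid R K 1 (S ⊔ Φ.sup G) := fun h hh => by
        rw [mul_comm]
        exact hHle hh y hy
      exact hw y hyH

end Aux

/-- if `R` has `t`-finite character, then `R` is `v`-coherent iff
`R_M` is `v`-coherent for every `t`-maximal ideal `M` of `R`. -/
theorem statement_17 {R K : Type*} [CommRing R] [IsDomain R] [Field K] [Algebra R K]
    [IsFractionRing R K] (hfc : OpFiniteCharacter R K (top R K)) :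
    SubringVCoherent R K 1 ↔
      ∀ M : Submodule R K, IsOpMaxIdeal R K (top R K) M →
        SubringVCoherent R K (locSub R K (M.comap (Algebra.linearMap R K)) 1) :=
  ⟨fun hv _ hM => forward_vcoh hv hM, fun hloc => backward_vcoh hfc hloc⟩
end
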